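/- For any infinite cardinal κ, the semigroup IPF(σℕ^κ) is isomorphic to the semidirect product S_κ ⋉ σB^κ, where σB^κ = σℕ^κ × σℕ^κ with multiplication (a,b)*(c,d) = (a + max{b,c} - b, d + max{b,c} - c), and S_κ acts on σB^κ by (a,b) ↦ (a∘g⁻¹, b∘g⁻¹); the semidirect product has multiplication (g,[a,b])(h,[c,d]) = (gh, Φ_h([a,b]) * [c,d]). -/

import Mathlib

open scoped Classical

/-- `σℕ^κ`: functions `κ → ℕ` with all values `≥ 1` and only finitely many values `≠ 1`. -/
def sigmaN (κ : Type*) : Set (κ → ℕ) :=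
  {a | (∀ x, 1 ≤ a x) ∧ {x | a x ≠ 1}.Finite}

/-- The poset `σℕ^κ` (with the pointwise order, inherited from `κ → ℕ`). -/
abbrev SN (κ : Type*) := ↥(sigmaN κ)

/-- A partial map `α` on `σℕ^κ` belongs to `IPF(σℕ^κ)` iff it is an order isomorphism
from a principal filter `↑a` onto a principal filter `↑b`. Multiplication in
`IPF(σℕ^κ)` is left-to-right composition of partial maps: `α` followed by `β`
is `β.comp α` (`PFun` composition). -/
def IsIPF {κ : Type*} (α : SN κ →. SN κ) : Prop :=
  ∃ a b : SN κ, α.Dom = {z | a ≤ z} ∧ α.ran = {z | b ≤ z} ∧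
    ∀ (z w : SN κ) (hz : z ∈ α.Dom) (hw : w ∈ α.Dom),
      z ≤ w ↔ α.fn z hz ≤ α.fn w hw

/-- `F°_g : σℕ^κ → σℕ^κ`, `a ↦ a ∘ g⁻¹`. -/
noncomputable def FgSN {κ : Type*} (g : Equiv.Perm κ) (a : SN κ) : SN κ :=
  ⟨fun x => a.1 (g.symm x), by
    refine ⟨fun x => a.2.1 _, Set.Finite.subset (a.2.2.image g) fun x hx => ?_⟩
    exact ⟨g.symm x, hx, by simp⟩⟩

/-- `a + max{b,c} - b` (pointwise) as an element of `σℕ^κ`. -/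
noncomputable def bop {κ : Type*} (a b c : SN κ) : SN κ :=
  ⟨fun x => a.1 x + max (b.1 x) (c.1 x) - b.1 x, by
    refine ⟨fun x => ?_, Set.Finite.subset ((a.2.2.union b.2.2).union c.2.2) fun x hx => ?_⟩
    · have h1 := a.2.1 x
      have h2 : b.1 x ≤ max (b.1 x) (c.1 x) := le_max_left _ _
      dsimp only
      omega
    · simp only [Set.mem_setOf_eq] at hx
      by_contra h
      simp only [Set.mem_union, Set.mem_setOf_eq, not_or, not_not] at h
      exact hx (by simp [h.1.1, h.1.2, h.2])⟩

/-- The multiplication of `σB^κ`: `(a,b) * (c,d) = (a + max{b,c} - b, d + max{b,c} - c)`. -/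
noncomputable def bmul {κ : Type*} (p q : SN κ × SN κ) : SN κ × SN κ :=
  (bop p.1 p.2 q.1, bop q.2 q.1 p.2)

/-- The action of `S_κ` on `σB^κ`: `(a,b) ↦ (a ∘ g⁻¹, b ∘ g⁻¹)`. -/
noncomputable def PhiG {κ : Type*} (g : Equiv.Perm κ) (p : SN κ × SN κ) : SN κ × SN κ :=
  (FgSN g p.1, FgSN g p.2)

/-- The multiplication of the semidirect product `S_κ ⋉ σB^κ`:
`(g,[a,b])(h,[c,d]) = (gh, Φ_h([a,b]) * [c,d])`, where `g.trans h` applies `g` first. -/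
noncomputable def sdMul {κ : Type*} (u v : Equiv.Perm κ × (SN κ × SN κ)) :
    Equiv.Perm κ × (SN κ × SN κ) :=
  (u.1.trans v.1, bmul (PhiG v.1 u.2) v.2)

/-!
The principal filter `↑a` of `σℕ^κ` is a copy of `κ →₀ ℕ` via `z ↦ z - a`, so an element of
`IPF(σℕ^κ)` is an order automorphism of `κ →₀ ℕ` in disguise. Such an automorphism preserves
covers, so it permutes the atoms `single i 1` by some `g`; composed with the coordinate
permutation by `g⁻¹` it fixes every atom, hence (climbing along covers) every `single i n`, hence
everything, since `z` is determined by the `single i n` below it. So each element of `IPF(σℕ^κ)`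
is `z ↦ b + (z ∘ g⁻¹ - A)` for a unique `(g, A, b)`, and composing two such maps is a pointwise
computation that gives exactly the multiplication of `S_κ ⋉ σB^κ`.
-/

namespace Finsupp

variable {ι : Type*}

theorem lt_add_single_one (z : ι →₀ ℕ) (i : ι) : z < z + single i 1 :=
  lt_add_of_pos_right z (pos_iff_ne_zero.2 (single_ne_zero.2 one_ne_zero))

theorem covBy_iff_exists_eq_add_single {z w : ι →₀ ℕ} : z ⋖ w ↔ ∃ i, w = z + single i 1 := by
  constructor
  · intro h
    obtain ⟨i, hi⟩ : ∃ i, z i < w i := by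
      by_contra! hle
      exact h.lt.ne (le_antisymm h.le hle)
    have hle : z + single i 1 ≤ w := fun j => by
      rcases eq_or_ne i j with rfl | hij
      · simpa using hi
      · simpa [single_apply, hij] using h.le j
    have hlt := lt_add_single_one z i
    exact ⟨i, (((covBy_iff_lt_and_eq_or_eq.1 h).2 _ hlt.le hle).resolve_left hlt.ne').symm⟩
  · rintro ⟨i, rfl⟩
    refine covBy_iff_lt_and_eq_or_eq.2 ⟨lt_add_single_one z i, fun u hzu hu => ?_⟩
    have hui : u i ≤ z i + 1 := by simpa using hu i
    by_cases hzi : u i = z i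
    · left
      ext j
      rcases eq_or_ne i j with rfl | hij
      · exact hzi
      · exact le_antisymm (by simpa [single_apply, hij] using hu j) (hzu j)
    · right
      ext j
      rcases eq_or_ne i j with rfl | hij
      · have := hzu i
        simp only [coe_add, Pi.add_apply, single_eq_same]
        omega
      · exact le_antisymm (hu j) (by simpa [single_apply, hij] using hzu j)

theorem zero_covBy_iff_exists_eq_single {w : ι →₀ ℕ} : 0 ⋖ w ↔ ∃ i, w = single i 1 := by
  simp [covBy_iff_exists_eq_add_single]

theorem exists_orderIso_apply_single_one (φ : (ι →₀ ℕ) ≃o (ι →₀ ℕ)) (i : ι) :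
    ∃ j, φ (single i 1) = single j 1 := by
  have hφ0 : φ 0 = 0 := φ.map_bot
  rw [← zero_covBy_iff_exists_eq_single, ← hφ0]
  exact (apply_covBy_apply_iff φ).2 (zero_covBy_iff_exists_eq_single.2 ⟨i, rfl⟩)

theorem exists_perm_orderIso_apply_single_one (φ : (ι →₀ ℕ) ≃o (ι →₀ ℕ)) :
    ∃ g : Equiv.Perm ι, ∀ i, φ (single i 1) = single (g i) 1 := by
  choose f hf using exists_orderIso_apply_single_one φ
  choose f' hf' using exists_orderIso_apply_single_one φ.symm
  have hinv : ∀ i, f' (f i) = i := fun i => by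
    rw [← single_left_inj (one_ne_zero (α := ℕ)), ← hf', ← hf, φ.symm_apply_apply]
  have hinv' : ∀ j, f (f' j) = j := fun j => by
    rw [← single_left_inj (one_ne_zero (α := ℕ)), ← hf, ← hf', φ.apply_symm_apply]
  exact ⟨⟨f, f', hinv, hinv'⟩, hf⟩

theorem orderIso_eq_refl_of_apply_single_one {ψ : (ι →₀ ℕ) ≃o (ι →₀ ℕ)}
    (hψ : ∀ i, ψ (single i 1) = single i 1) : ψ = OrderIso.refl _ := by
  have single_one_le : ∀ i z, single i 1 ≤ ψ z ↔ single i 1 ≤ z := fun i z => by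
    simpa only [hψ] using ψ.le_iff_le (x := single i 1) (y := z)
  have hsingle : ∀ i n, ψ (single i n) = single i n := by
    intro i n
    induction n with
    | zero => rw [single_zero]; exact ψ.map_bot
    | succ n ih =>
      have hcov : single i n ⋖ ψ (single i (n + 1)) := by
        rw [← ih, apply_covBy_apply_iff ψ, single_add]
        exact covBy_iff_exists_eq_add_single.2 ⟨i, rfl⟩
      obtain ⟨j, hj⟩ := covBy_iff_exists_eq_add_single.1 hcov
      obtain rfl : j = i := by
        have : single j 1 ≤ single i (n + 1) := by
          rw [← single_one_le, hj]; exact le_add_self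
        by_contra hne
        simp [single_le_iff, Ne.symm hne] at this
      rw [hj, single_add]
  ext z i
  refine eq_of_forall_le_iff fun n => ?_
  rw [OrderIso.refl_apply, ← single_le_iff, ← single_le_iff]
  conv_rhs => rw [← ψ.le_iff_le, hsingle]

def equivMapDomainOrderIso (g : Equiv.Perm ι) : (ι →₀ ℕ) ≃o (ι →₀ ℕ) where
  toEquiv := (Finsupp.domCongr g).toEquiv
  map_rel_iff' {z w} := by
    simp only [AddEquiv.toEquiv_eq_coe, AddEquiv.coe_toEquiv, domCongr_apply, le_def,
      equivMapDomain_apply]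
    exact g.symm.surjective.forall (p := fun i => z i ≤ w i) |>.symm

@[simp]
theorem equivMapDomainOrderIso_apply (g : Equiv.Perm ι) (z : ι →₀ ℕ) :
    equivMapDomainOrderIso g z = z.equivMapDomain g :=
  rfl

theorem exists_perm_orderIso_eq_equivMapDomain (φ : (ι →₀ ℕ) ≃o (ι →₀ ℕ)) :
    ∃ g : Equiv.Perm ι, ∀ z, φ z = z.equivMapDomain g := by
  obtain ⟨g, hg⟩ := exists_perm_orderIso_apply_single_one φ
  have h := orderIso_eq_refl_of_apply_single_one (ψ := φ.trans (equivMapDomainOrderIso g).symm)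
    fun i => by
      rw [OrderIso.trans_apply, hg, OrderIso.symm_apply_eq]
      simp
  refine ⟨g, fun z => ?_⟩
  rw [← equivMapDomainOrderIso_apply, ← OrderIso.symm_apply_eq]
  exact congrArg (· z) h

end Finsupp

namespace SN

variable {κ : Type*}

theorem le_def {a b : SN κ} : a ≤ b ↔ ∀ x, a.1 x ≤ b.1 x := Iff.rfl

@[ext]
theorem ext {a b : SN κ} (h : ∀ x, a.1 x = b.1 x) : a = b := Subtype.ext (funext h)

theorem finite_ne (a b : SN κ) : {x | a.1 x ≠ b.1 x}.Finite :=
  (a.2.2.union b.2.2).subset fun x hx => by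
    by_contra h
    simp only [Set.mem_union, Set.mem_ofPred_eq, not_or, not_not] at h
    exact hx (h.1.trans h.2.symm)

def addFinsupp (a : SN κ) (d : κ →₀ ℕ) : SN κ :=
  ⟨fun x => a.1 x + d x, fun x => (a.2.1 x).trans (Nat.le_add_right _ _),
    (a.2.2.union d.support.finite_toSet).subset fun x hx => by
      by_contra h
      simp only [Set.mem_union, Set.mem_ofPred_eq, Finset.mem_coe, Finsupp.mem_support_iff,
        not_or, not_not] at h
      simp [h.1, h.2] at hx⟩

theorem addFinsupp_apply (a : SN κ) (d : κ →₀ ℕ) (x : κ) :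
    (addFinsupp a d).1 x = a.1 x + d x := rfl

noncomputable def iciOrderIso (a : SN κ) : Set.Ici a ≃o (κ →₀ ℕ) where
  toFun z := Finsupp.ofSupportFinite (fun x => z.1.1 x - a.1 x)
    ((finite_ne z.1 a).subset fun x hx h => hx (by simp [h]))
  invFun d := ⟨addFinsupp a d, fun x => Nat.le_add_right _ _⟩
  left_inv z := by
    ext x
    have : a.1 x ≤ z.1.1 x := z.2 x
    simp only [addFinsupp_apply, Finsupp.ofSupportFinite_coe]
    omega
  right_inv d := by
    ext x
    simp [addFinsupp_apply, Finsupp.ofSupportFinite_coe]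
  map_rel_iff' {z w} := by
    simp only [Equiv.coe_fn_mk, Finsupp.le_def, Finsupp.ofSupportFinite_coe]
    refine forall_congr' fun x => ?_
    have : a.1 x ≤ z.1.1 x := z.2 x
    have : a.1 x ≤ w.1.1 x := w.2 x
    change _ ↔ z.1.1 x ≤ w.1.1 x
    omega

theorem iciOrderIso_apply (a : SN κ) (z : Set.Ici a) (x : κ) :
    iciOrderIso a z x = z.1.1 x - a.1 x := rfl

end SN

section

variable {κ : Type*}

theorem FgSN_apply (g : Equiv.Perm κ) (a : SN κ) (x : κ) : (FgSN g a).1 x = a.1 (g.symm x) := rfl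

theorem bop_apply (a b c : SN κ) (x : κ) :
    (bop a b c).1 x = a.1 x + max (b.1 x) (c.1 x) - b.1 x := rfl

theorem FgSN_trans (g h : Equiv.Perm κ) (a : SN κ) : FgSN (g.trans h) a = FgSN h (FgSN g a) := rfl

@[simp]
theorem FgSN_symm_FgSN (g : Equiv.Perm κ) (a : SN κ) : FgSN g.symm (FgSN g a) = a :=
  SN.ext fun x => by simp [FgSN_apply]

@[simp]
theorem FgSN_FgSN_symm (g : Equiv.Perm κ) (a : SN κ) : FgSN g (FgSN g.symm a) = a :=
  SN.ext fun x => by simp [FgSN_apply]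

theorem FgSN_le_FgSN_iff (g : Equiv.Perm κ) {a b : SN κ} : FgSN g a ≤ FgSN g b ↔ a ≤ b :=
  g.symm.surjective.forall (p := fun x => a.1 x ≤ b.1 x) |>.symm

theorem FgSN_bop (g : Equiv.Perm κ) (a b c : SN κ) :
    FgSN g (bop a b c) = bop (FgSN g a) (FgSN g b) (FgSN g c) := rfl

theorem bop_self (a b : SN κ) : bop a b b = a :=
  SN.ext fun x => by rw [bop_apply]; omega

theorem bop_le_iff {P Q C R : SN κ} : bop P Q C ≤ R ↔ P ≤ R ∧ C ≤ bop Q P R := by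
  simp only [SN.le_def, bop_apply, ← forall_and]
  exact forall_congr' fun x => by omega

theorem bop_bop_of_bop_le {P Q C R : SN κ} (d : SN κ) (h : bop P Q C ≤ R) :
    bop d C (bop Q P R) = bop (bop d C Q) (bop P Q C) R :=
  SN.ext fun x => by
    have := SN.le_def.1 h x
    simp only [bop_apply] at this ⊢
    omega

theorem exists_perm_orderIso_Ici_apply {a b : SN κ} (F : Set.Ici a ≃o Set.Ici b) :
    ∃ g : Equiv.Perm κ, ∀ z, (F z : SN κ) = bop b (FgSN g a) (FgSN g z) := by
  obtain ⟨g, hg⟩ := Finsupp.exists_perm_orderIso_eq_equivMapDomain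
    (((SN.iciOrderIso a).symm.trans F).trans (SN.iciOrderIso b))
  refine ⟨g, fun z => SN.ext fun x => ?_⟩
  have hx := DFunLike.congr_fun (hg (SN.iciOrderIso a z)) x
  simp only [OrderIso.trans_apply, OrderIso.symm_apply_apply, SN.iciOrderIso_apply,
    Finsupp.equivMapDomain_apply] at hx
  have hb : b.1 x ≤ (F z).1.1 x := (F z).2 x
  have ha : a.1 (g.symm x) ≤ z.1.1 (g.symm x) := z.2 _
  rw [bop_apply, FgSN_apply, FgSN_apply]
  omega

/-- The element of `IPF(σℕ^κ)` corresponding to `(g, [A, b])`: on `{z | A ≤ z ∘ g⁻¹}` it is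
`z ↦ b + (z ∘ g⁻¹ - A)`, which is what `bop b A (z ∘ g⁻¹)` computes there. -/
noncomputable def ipfMap (g : Equiv.Perm κ) (A b : SN κ) : SN κ →. SN κ :=
  fun z => ⟨A ≤ FgSN g z, fun _ => bop b A (FgSN g z)⟩

theorem mem_ipfMap {g : Equiv.Perm κ} {A b z w : SN κ} :
    w ∈ ipfMap g A b z ↔ A ≤ FgSN g z ∧ bop b A (FgSN g z) = w := by
  simp [ipfMap, Part.mem_mk_iff]

theorem dom_ipfMap (g : Equiv.Perm κ) (A b : SN κ) :
    (ipfMap g A b).Dom = Set.Ici (FgSN g.symm A) := by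
  ext z
  change A ≤ FgSN g z ↔ FgSN g.symm A ≤ z
  rw [← FgSN_le_FgSN_iff g (a := FgSN g.symm A), FgSN_FgSN_symm]

theorem fn_ipfMap (g : Equiv.Perm κ) (A b z : SN κ) (h : z ∈ (ipfMap g A b).Dom) :
    (ipfMap g A b).fn z h = bop b A (FgSN g z) := rfl

theorem ran_ipfMap (g : Equiv.Perm κ) (A b : SN κ) : (ipfMap g A b).ran = Set.Ici b := by
  ext w
  simp only [PFun.ran, mem_ipfMap, Set.mem_ofPred_eq, Set.mem_Ici]
  constructor
  · rintro ⟨z, -, rfl⟩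
    exact SN.le_def.2 fun x => by rw [bop_apply]; omega
  · refine fun hw => ⟨FgSN g.symm (bop A b w), ?_, SN.ext fun x => ?_⟩ <;>
      simp only [FgSN_FgSN_symm]
    · exact SN.le_def.2 fun x => by rw [bop_apply]; omega
    · have : b.1 x ≤ w.1 x := hw x
      simp only [bop_apply]
      omega

theorem isIPF_ipfMap (g : Equiv.Perm κ) (A b : SN κ) : IsIPF (ipfMap g A b) := by
  refine ⟨_, b, dom_ipfMap g A b, ran_ipfMap g A b, fun z w hz hw => ?_⟩
  rw [fn_ipfMap, fn_ipfMap, ← FgSN_le_FgSN_iff g]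
  simp only [SN.le_def, bop_apply]
  refine forall_congr' fun x => ?_
  have : A.1 x ≤ (FgSN g z).1 x := hz x
  have : A.1 x ≤ (FgSN g w).1 x := hw x
  omega

theorem ipfMap_comp (g h : Equiv.Perm κ) (A b C d : SN κ) :
    (ipfMap h C d).comp (ipfMap g A b) =
      ipfMap (g.trans h) (bop (FgSN h A) (FgSN h b) C) (bop d C (FgSN h b)) := by
  funext z
  ext w
  rw [PFun.comp_apply]
  refine (Part.mem_bind_iff (f := ipfMap g A b z) (g := ipfMap h C d)).trans ?_
  simp only [mem_ipfMap, FgSN_trans]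
  constructor
  · rintro ⟨y, ⟨hA, rfl⟩, hC, rfl⟩
    rw [← FgSN_le_FgSN_iff h] at hA
    rw [FgSN_bop] at hC ⊢
    have hle := bop_le_iff.2 ⟨hA, hC⟩
    exact ⟨hle, (bop_bop_of_bop_le d hle).symm⟩
  · rintro ⟨hle, rfl⟩
    obtain ⟨hA, hC⟩ := bop_le_iff.1 hle
    refine ⟨_, ⟨(FgSN_le_FgSN_iff h).1 hA, rfl⟩, ?_⟩
    rw [FgSN_bop]
    exact ⟨hC, bop_bop_of_bop_le d hle⟩

theorem ipfMap_injective :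
    Function.Injective fun u : Equiv.Perm κ × (SN κ × SN κ) => ipfMap u.1 u.2.1 u.2.2 := by
  rintro ⟨g, A, b⟩ ⟨g', A', b'⟩ h
  simp only at h
  have ha : FgSN g.symm A = FgSN g'.symm A' := by
    have := dom_ipfMap g A b
    rwa [h, dom_ipfMap, Set.Ici_inj, eq_comm] at this
  have hval : ∀ z, FgSN g.symm A ≤ z → bop b A (FgSN g z) = bop b' A' (FgSN g' z) := by
    intro z hz
    have hmem : bop b A (FgSN g z) ∈ ipfMap g A b z :=
      mem_ipfMap.2 ⟨by rwa [← FgSN_le_FgSN_iff g, FgSN_FgSN_symm] at hz, rfl⟩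
    rw [h] at hmem
    exact (mem_ipfMap.1 hmem).2.symm
  have hb : b = b' := by
    have := hval _ le_rfl
    rwa [FgSN_FgSN_symm, ha, FgSN_FgSN_symm, bop_self, bop_self] at this
  subst hb
  have hg : g = g' := Equiv.ext fun x => by
    have := congrArg (fun c : SN κ => c.1 (g x))
      (hval (SN.addFinsupp (FgSN g.symm A) (Finsupp.single x 1)) fun y => Nat.le_add_right _ _)
    have hA := congrArg (fun c : SN κ => c.1 (g'.symm (g x))) ha
    simp only [FgSN_apply, Equiv.symm_symm] at hA
    simp [bop_apply, FgSN_apply, SN.addFinsupp_apply, Finsupp.single_apply, hA] at this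
    split_ifs at this with hx
    · exact g'.symm_apply_eq.1 hx.symm
    · omega
  subst hg
  simp only [Prod.mk.injEq, true_and, and_true]
  simpa using congrArg (FgSN g) ha

theorem exists_eq_ipfMap_of_isIPF {α : SN κ →. SN κ} (hα : IsIPF α) :
    ∃ g A b, α = ipfMap g A b := by
  obtain ⟨a, b, hdom, hran, hord⟩ := hα
  have hdom' : ∀ z, z ∈ α.Dom ↔ a ≤ z := fun z => by rw [hdom]; rfl
  have hran' : ∀ w, w ∈ α.ran ↔ b ≤ w := fun w => by rw [hran]; rfl
  let f : Set.Ici a ↪o Set.Ici b := OrderEmbedding.ofMapLEIff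
    (fun z => ⟨α.fn z ((hdom' z).2 z.2), (hran' _).1 ⟨z, Part.get_mem _⟩⟩)
    fun z w => (hord z w _ _).symm
  have hf : Function.Surjective f := by
    rintro ⟨w, hw⟩
    obtain ⟨z, hz, rfl⟩ := (hran' w).2 hw
    exact ⟨⟨z, (hdom' z).1 hz⟩, rfl⟩
  obtain ⟨g, hg⟩ := exists_perm_orderIso_Ici_apply (OrderIso.ofSurjective f hf)
  refine ⟨g, FgSN g a, b, PFun.ext' (fun z => ?_) fun z hz _ => hg ⟨z, (hdom' z).1 hz⟩⟩
  rw [hdom', dom_ipfMap, FgSN_symm_FgSN]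
  rfl

noncomputable def toIPF (u : Equiv.Perm κ × (SN κ × SN κ)) : {α : SN κ →. SN κ // IsIPF α} :=
  ⟨ipfMap u.1 u.2.1 u.2.2, isIPF_ipfMap u.1 u.2.1 u.2.2⟩

theorem toIPF_bijective : Function.Bijective (toIPF (κ := κ)) := by
  refine ⟨fun u v h => ipfMap_injective (congrArg Subtype.val h), fun α => ?_⟩
  obtain ⟨g, A, b, hα⟩ := exists_eq_ipfMap_of_isIPF α.2
  exact ⟨(g, A, b), Subtype.ext hα.symm⟩

theorem toIPF_sdMul (u v : Equiv.Perm κ × (SN κ × SN κ)) :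
    (toIPF v).1.comp (toIPF u).1 = (toIPF (sdMul u v)).1 :=
  ipfMap_comp _ _ _ _ _ _

end

theorem stmt17_general {κ : Type*} :
    ∃ Ψ : {α : SN κ →. SN κ // IsIPF α} → Equiv.Perm κ × (SN κ × SN κ),
      Function.Bijective Ψ ∧
      ∀ (α β : {α : SN κ →. SN κ // IsIPF α}) (h : IsIPF (β.1.comp α.1)),
        Ψ ⟨β.1.comp α.1, h⟩ = sdMul (Ψ α) (Ψ β) := by
  let e := Equiv.ofBijective _ (toIPF_bijective (κ := κ))
  refine ⟨e.symm, e.symm.bijective, fun α β h => ?_⟩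
  obtain ⟨u, rfl⟩ := e.surjective α
  obtain ⟨v, rfl⟩ := e.surjective β
  rw [Equiv.symm_apply_eq, e.symm_apply_apply, e.symm_apply_apply]
  exact Subtype.ext (toIPF_sdMul u v)

/-- `IPF(σℕ^κ)` is isomorphic to the semidirect product `S_κ ⋉ σB^κ`
(multiplication in `IPF(σℕ^κ)` is left-to-right composition: `α` then `β`
is `β.comp α`). -/
theorem stmt17 {κ : Type*} [Infinite κ] :
    ∃ Ψ : {α : SN κ →. SN κ // IsIPF α} → Equiv.Perm κ × (SN κ × SN κ),
      Function.Bijective Ψ ∧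
      ∀ (α β : {α : SN κ →. SN κ // IsIPF α}) (h : IsIPF (β.1.comp α.1)),
        Ψ ⟨β.1.comp α.1, h⟩ = sdMul (Ψ α) (Ψ β) :=
  stmt17_general
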